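/- arXiv:2302.13746 — 2 statements merged into one kernel-verified Lean document; each statement's English description precedes it below -/
import Mathlib

section
/- Let X be a path-connected H-SLT space with H ≤ π₁(X,x₀) locally quasinormal. Then for every path α from x₀, if X is homotopically Hausdorff relative to H_α = [ᾱHα], then X is homotopically path Hausdorff relative to H_α. -/
open CategoryTheory Topology
open scoped Pointwise

noncomputable section
namespace Paper

variable {X : Type*} [TopologicalSpace X]

attribute [local instance] Path.Homotopic.setoid

/-- The homotopy class of a loop as an element of the fundamental group. -/
def loopClass {x : X} (γ : Path x x) : FundamentalGroup X x :=
  (⟦γ⟧ : FundamentalGroupoid.mk x ⟶ FundamentalGroupoid.mk x)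

/-- Conjugation of the fundamental group along a path: `h ↦ [ᾱ ∗ h ∗ α]`. -/
def pathConj {x₀ x : X} (α : Path x₀ x) :
    FundamentalGroup X x₀ ≃* FundamentalGroup X x :=
  FundamentalGroup.fundamentalGroupMulEquivOfPath α

/-- The path-conjugate subgroup `H_α = [ᾱ H α]`. -/
def conjSubgroup {x₀ x : X} (H : Subgroup (FundamentalGroup X x₀)) (α : Path x₀ x) :
    Subgroup (FundamentalGroup X x) :=
  H.map (pathConj α).toMonoidHom

/-- `π(α,V)`: the subgroup of `π₁(X,x₀)` generated by classes `[α∗β∗ᾱ]`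
with `β` a loop at `α(1)` lying in `V`. -/
def piSub {x₀ x : X} (α : Path x₀ x) (V : Set X) : Subgroup (FundamentalGroup X x₀) :=
  Subgroup.closure
    {g | ∃ β : Path x x, (∀ t, β t ∈ V) ∧ g = loopClass ((α.trans β).trans α.symm)}

/-- `i₍#₎π₁(V,x)`: the image in `π₁(X,x)` of the fundamental group of `V`. -/
def loopSubgroup (x : X) (V : Set X) : Subgroup (FundamentalGroup X x) :=
  Subgroup.closure {g | ∃ β : Path x x, (∀ t, β t ∈ V) ∧ g = loopClass β}

/-- `H` is locally quasinormal. -/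
def LocallyQuasinormal {x₀ : X} (H : Subgroup (FundamentalGroup X x₀)) : Prop :=
  ∀ (x : X) (α : Path x₀ x) (U : Set X), IsOpen U → x ∈ U →
    ∃ V : Set X, V ⊆ U ∧ IsOpen V ∧ x ∈ V ∧
      (H : Set (FundamentalGroup X x₀)) * (piSub α V : Set (FundamentalGroup X x₀)) =
        (piSub α V : Set (FundamentalGroup X x₀)) * (H : Set (FundamentalGroup X x₀))

/-- `X` is an `H`-SLT space at the basepoint of `H`. -/
def SLTAt {b : X} (H : Subgroup (FundamentalGroup X b)) : Prop :=
  ∀ (x : X) (α : Path b x) (U : Set X), IsOpen U → b ∈ U →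
    ∃ V : Set X, IsOpen V ∧ x ∈ V ∧
      ∀ β : Path x x, (∀ t, β t ∈ V) →
        loopClass ((α.trans β).trans α.symm) ∈
          (H : Set (FundamentalGroup X b)) * (loopSubgroup b U : Set (FundamentalGroup X b))

/-- `X` is an `H`-SLT space. -/
def IsHSLT {x₀ : X} (H : Subgroup (FundamentalGroup X x₀)) : Prop :=
  ∀ (x : X) (δ : Path x₀ x), SLTAt (conjSubgroup H δ)

/-- `X` is a strong `H`-SLT space at the basepoint of `H`. -/
def StrongSLTAt {b : X} (H : Subgroup (FundamentalGroup X b)) : Prop :=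
  ∀ (x : X) (U : Set X), IsOpen U → b ∈ U →
    ∃ V : Set X, IsOpen V ∧ x ∈ V ∧
      ∀ (α : Path b x) (β : Path x x), (∀ t, β t ∈ V) →
        loopClass ((α.trans β).trans α.symm) ∈
          (H : Set (FundamentalGroup X b)) * (loopSubgroup b U : Set (FundamentalGroup X b))

/-- `X` is a strong `H`-SLT space. -/
def IsStrongHSLT {x₀ : X} (H : Subgroup (FundamentalGroup X x₀)) : Prop :=
  ∀ (x : X) (δ : Path x₀ x), StrongSLTAt (conjSubgroup H δ)

/-- `X` is homotopically Hausdorff relative to `H`. -/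
def HomotopicallyHausdorffRel {b : X} (H : Subgroup (FundamentalGroup X b)) : Prop :=
  ∀ (x : X) (α : Path b x) (g : FundamentalGroup X b), g ∉ H →
    ∃ U : Set X, IsOpen U ∧ x ∈ U ∧
      ∀ β : Path x x, (∀ t, β t ∈ U) →
        ∀ h ∈ H, loopClass ((α.trans β).trans α.symm) ≠ h * g

/-- `X` is homotopically path Hausdorff relative to `H`. -/
def HomotopicallyPathHausdorffRel {b : X} (H : Subgroup (FundamentalGroup X b)) : Prop :=
  ∀ (x : X) (α β : Path b x), loopClass (α.trans β.symm) ∉ H →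
    ∃ (n : ℕ), 0 < n ∧
    ∃ (t : Fin (n + 1) → unitInterval) (U : Fin n → Set X),
      StrictMono t ∧ t 0 = 0 ∧ t (Fin.last n) = 1 ∧
      (∀ i : Fin n, IsOpen (U i) ∧ ∀ s ∈ Set.Icc (t i.castSucc) (t i.succ), α s ∈ U i) ∧
      ∀ γ : Path b x,
        (∀ i : Fin n, ∀ s ∈ Set.Icc (t i.castSucc) (t i.succ), γ s ∈ U i) →
        (∀ j : Fin (n + 1), γ (t j) = α (t j)) →
        loopClass (γ.trans β.symm) ∉ H

/-- The collection of paths starting at `b`, with free endpoint. -/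
def PathsFrom (b : X) := Σ x : X, Path b x

/-- The relation identifying paths in the standard construction `X̃_H`. -/
def stdRel {b : X} (H : Subgroup (FundamentalGroup X b)) :
    PathsFrom b → PathsFrom b → Prop :=
  fun p q => ∃ h : q.1 = p.1, loopClass (p.2.trans (h ▸ q.2).symm) ∈ H

/-- The standard construction `X̃_H`. -/
def StdConstr {b : X} (H : Subgroup (FundamentalGroup X b)) := Quot (stdRel H)

/-- The class `[α]_H` of a path in the standard construction. -/
def stdClass {b : X} (H : Subgroup (FundamentalGroup X b)) (p : PathsFrom b) :
    StdConstr H :=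
  Quot.mk _ p

/-- The basic whisker neighborhood `N_H([α]_H, U)`. -/
def whiskerNbhd {b : X} (H : Subgroup (FundamentalGroup X b)) (p : PathsFrom b)
    (U : Set X) : Set (StdConstr H) :=
  {z | ∃ (y : X) (δ : Path p.1 y), (∀ t, δ t ∈ U) ∧ z = stdClass H ⟨y, p.2.trans δ⟩}

/-- The whisker topology on the standard construction. -/
def whiskerTopology {b : X} (H : Subgroup (FundamentalGroup X b)) :
    TopologicalSpace (StdConstr H) :=
  TopologicalSpace.generateFrom
    {s | ∃ (p : PathsFrom b) (U : Set X), IsOpen U ∧ p.1 ∈ U ∧ s = whiskerNbhd H p U}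

/-- The Spanier subgroup `π(𝒰, y)` of `π₁(X,y)` associated to a family `𝒰` of subsets. -/
def spanier (y : X) (𝒰 : Set (Set X)) : Subgroup (FundamentalGroup X y) :=
  Subgroup.closure
    {g | ∃ (z : X) (γ : Path y z) (β : Path z z), (∃ U ∈ 𝒰, ∀ t, β t ∈ U) ∧
          g = loopClass ((γ.trans β).trans γ.symm)}

/-- An open cover of `X`. -/
def IsOpenCover (𝒰 : Set (Set X)) : Prop :=
  (∀ U ∈ 𝒰, IsOpen U) ∧ ⋃₀ 𝒰 = Set.univ

/-- The basic lasso neighborhood `N_H([α]_H, 𝒰, U)`. -/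
def lassoNbhd {b : X} (H : Subgroup (FundamentalGroup X b)) (p : PathsFrom b)
    (𝒰 : Set (Set X)) (U : Set X) : Set (StdConstr H) :=
  {z | ∃ (l : Path p.1 p.1) (y : X) (δ : Path p.1 y),
        loopClass l ∈ spanier p.1 𝒰 ∧ (∀ t, δ t ∈ U) ∧
        z = stdClass H ⟨y, (p.2.trans l).trans δ⟩}

/-- The lasso topology on the standard construction. -/
def lassoTopology {b : X} (H : Subgroup (FundamentalGroup X b)) :
    TopologicalSpace (StdConstr H) :=
  TopologicalSpace.generateFrom
    {s | ∃ (p : PathsFrom b) (𝒰 : Set (Set X)) (U : Set X),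
          IsOpenCover 𝒰 ∧ U ∈ 𝒰 ∧ IsOpen U ∧ p.1 ∈ U ∧ s = lassoNbhd H p 𝒰 U}

/-- The endpoint projection `p_H : X̃_H → X`. -/
def endPt {b : X} (H : Subgroup (FundamentalGroup X b)) : StdConstr H → X :=
  Quot.lift (fun p => p.1) (fun _ _ h => h.1.symm)

/-- The whisker topology on the fundamental group `π₁^{wh}(X,x)`. -/
def whiskerTopOnPi (x : X) : TopologicalSpace (FundamentalGroup X x) :=
  TopologicalSpace.generateFrom
    {s | ∃ (g : FundamentalGroup X x) (U : Set X), IsOpen U ∧ x ∈ U ∧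
          s = {g' | ∃ β : Path x x, (∀ t, β t ∈ U) ∧ g' = g * loopClass β}}

/-- The quasitopological fundamental group topology `π₁^{qtop}(X,x)`: the quotient of the
compact-open topology on the loop space. -/
def qTop (x : X) : TopologicalSpace (FundamentalGroup X x) :=
  TopologicalSpace.coinduced loopClass inferInstance

/-- A map `p : E → X` (with `E` carrying the topology `tE`) has the unique path
lifting property. -/
def UniquePathLifting {E : Type*} (tE : TopologicalSpace E) (p : E → X) : Prop :=
  letI := tE
  ∀ f g : C(unitInterval, E), (∀ t, p (f t) = p (g t)) → f 0 = g 0 → f = g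

/-- The small loop subgroup `π₁ˢ(X,x)`. -/
def smallLoopSubgroup (x : X) : Subgroup (FundamentalGroup X x) :=
  ⨅ (U : Set X) (_ : IsOpen U) (_ : x ∈ U), loopSubgroup x U

/-- The Spanier group `π₁^{sp}(X,x)`: the intersection of all Spanier subgroups. -/
def spanierGroup (x : X) : Subgroup (FundamentalGroup X x) :=
  ⨅ (𝒰 : Set (Set X)) (_ : IsOpenCover 𝒰), spanier x 𝒰

/-- The path Spanier subgroup `π̃(𝒱, x₀)` of a path open cover `𝒱`. -/
def pathSpanier {b : X} (𝒱 : PathsFrom b → Set X) : Subgroup (FundamentalGroup X b) :=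
  Subgroup.closure
    {g | ∃ (p : PathsFrom b) (β : Path p.1 p.1), (∀ t, β t ∈ 𝒱 p) ∧
          g = loopClass ((p.2.trans β).trans p.2.symm)}

end Paper
end

/-!
Let `K = H_{α₀} ≤ π₁(X, b)` with `b = α₀(1)`, and let `α, β : b → y` be paths with `[αβ̄] ∉ K`.
Relative homotopic Hausdorffness gives a neighbourhood `U` of `b` containing no loop of the coset
`K[αβ̄]`; local quasinormality shrinks it to `W` with `K · i#π₁(W) = i#π₁(W) · K`, so that this
product is a subgroup `S`. By the SLT property every point `α(s)` has an open neighbourhood whose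
loops, conjugated by the initial segment of `α`, lie in `S`; a Lebesgue-number partition `t` of
`[0, 1]` is subordinate to these. If `γ` agrees with `α` at every `t j` and runs through the same
sets, each discrepancy loop `α|[0, t j] · (γ|[0, t j])⁻¹` lies in `S`, because passing from `j` to
`j + 1` multiplies it by such a conjugated small loop. So `[αγ̄] ∈ K · i#π₁(W)`, and `[γβ̄] ∈ K`
would put a loop of `W ⊆ U` into `K[αβ̄]`.
-/

open Set
open scoped unitInterval

theorem Subgroup.coe_sup_of_mul_comm {G : Type*} [Group G] {H K : Subgroup G}
    (h : (H : Set G) * K = K * H) : ((H ⊔ K : Subgroup G) : Set G) = H * K := by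
  let M : Subgroup G :=
    { carrier := H * K
      one_mem' := ⟨1, H.one_mem, 1, K.one_mem, mul_one 1⟩
      mul_mem' := by
        rintro _ _ ⟨h₁, hh₁, k₁, hk₁, rfl⟩ ⟨h₂, hh₂, k₂, hk₂, rfl⟩
        obtain ⟨h₃, hh₃, k₃, hk₃, hkh⟩ : k₁ * h₂ ∈ (H : Set G) * K :=
          h ▸ mul_mem_mul hk₁ hh₂
        refine ⟨h₁ * h₃, mul_mem hh₁ hh₃, k₃ * k₂, mul_mem hk₃ hk₂, ?_⟩
        simp only at hkh ⊢
        rw [mul_assoc, ← mul_assoc h₃, hkh]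
        group
      inv_mem' := by
        rintro _ ⟨h₁, hh₁, k₁, hk₁, rfl⟩
        rw [mul_inv_rev, h]
        exact mul_mem_mul (inv_mem hk₁) (inv_mem hh₁) }
  refine subset_antisymm (?_ : H ⊔ K ≤ M)
    (Subgroup.mul_subset (le_sup_left (b := K)) (le_sup_right (a := H)))
  exact sup_le (fun x hx => ⟨x, hx, 1, K.one_mem, mul_one x⟩)
    (fun x hx => ⟨1, H.one_mem, x, hx, one_mul x⟩)

namespace unitInterval

theorem ordConnected_ball (s : I) (ε : ℝ) : (Metric.ball s ε).OrdConnected := by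
  have : Metric.ball s ε = Subtype.val ⁻¹' Ioo ((s : ℝ) - ε) (s + ε) := by
    rw [← Real.ball_eq_Ioo]
    rfl
  rw [this]
  exact ordConnected_Ioo.preimage_mono (Subtype.mono_coe _)

theorem exists_strictMono_Icc_subset_open_cover {ι : Type*} {c : ι → Set I}
    (hc₁ : ∀ j, IsOpen (c j)) (hc₂ : univ ⊆ ⋃ j, c j) :
    ∃ n, 0 < n ∧ ∃ t : Fin (n + 1) → I, StrictMono t ∧ t 0 = 0 ∧ t (Fin.last n) = 1 ∧
      ∀ i : Fin n, ∃ j, Icc (t i.castSucc) (t i.succ) ⊆ c j := by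
  obtain ⟨δ, hδ, hball⟩ := lebesgue_number_lemma_of_metric isCompact_univ hc₁ hc₂
  obtain ⟨N, hN⟩ := exists_nat_one_div_lt hδ
  have hpos : (0 : ℝ) < N + 1 := N.cast_add_one_pos
  let t : Fin (N + 2) → I := fun i =>
    ⟨i / (N + 1), div_nonneg i.val.cast_nonneg hpos.le,
      (div_le_one hpos).2 (by exact_mod_cast i.is_le)⟩
  refine ⟨N + 1, N.succ_pos, t, fun i j hij => ?_, ?_, ?_, fun i => ?_⟩
  · exact (div_lt_div_iff_of_pos_right hpos).2 (by exact_mod_cast hij)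
  · ext; simp [t]
  · ext; simp [t, hpos.ne']
  · obtain ⟨j, hj⟩ := hball (t i.castSucc) (mem_univ _)
    refine ⟨j, fun τ hτ => hj ?_⟩
    have hstep : (t i.succ : ℝ) - t i.castSucc = 1 / (N + 1) := by
      simp only [t, Fin.val_castSucc, Fin.val_succ]
      push_cast
      ring
    have h₁ : (t i.castSucc : ℝ) ≤ τ := hτ.1
    have h₂ : (τ : ℝ) ≤ t i.succ := hτ.2
    rw [Metric.mem_ball, Subtype.dist_eq, Real.dist_eq, abs_of_nonneg (sub_nonneg.2 h₁)]
    linarith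

end unitInterval

namespace Path.Homotopic.Quotient

variable {X : Type*} [TopologicalSpace X] {x₀ x₁ x₂ : X}

@[simp]
theorem symm_trans_cancel_left (γ : Path.Homotopic.Quotient x₀ x₁)
    (δ : Path.Homotopic.Quotient x₁ x₂) : γ.symm.trans (γ.trans δ) = δ := by
  rw [← trans_assoc, symm_trans, refl_trans]

@[simp]
theorem trans_symm_cancel_left (γ : Path.Homotopic.Quotient x₀ x₁)
    (δ : Path.Homotopic.Quotient x₀ x₂) : γ.trans (γ.symm.trans δ) = δ := by
  rw [← trans_assoc, trans_symm, refl_trans]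

end Path.Homotopic.Quotient

namespace Path

variable {X : Type*} [TopologicalSpace X] {x y z : X}

theorem trans_mem {V : Set X} {p : Path x y} {q : Path y z} (hp : ∀ t, p t ∈ V)
    (hq : ∀ t, q t ∈ V) (t : I) : p.trans q t ∈ V := by
  have ht : p.trans q t ∈ range p ∪ range q := trans_range p q ▸ mem_range_self t
  exact union_subset (range_subset_iff.2 hp) (range_subset_iff.2 hq) ht

theorem subpath_mem {V : Set X} {γ : Path x y} {u v : I} (h : ∀ s ∈ uIcc u v, γ s ∈ V)
    (t : I) : γ.subpath u v t ∈ V :=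
  h _ (range_subpathAux u v ▸ mem_range_self t)

def initialSegment (γ : Path x y) (s : I) : Path x (γ s) :=
  (γ.subpath 0 s).cast γ.source.symm rfl

@[simp]
theorem initialSegment_apply (γ : Path x y) (s t : I) :
    γ.initialSegment s t = γ (Icc.convexComb 0 s t) := rfl

theorem initialSegment_trans_subpath (γ : Path x y) (s u : I) :
    ((γ.initialSegment s).trans (γ.subpath s u)).Homotopic (γ.initialSegment u) :=
  Homotopic.pathCast ⟨Homotopy.subpathTransSubpath γ 0 s u⟩ γ.source.symm rfl

theorem initialSegment_eq_of_eq_zero {α : Path x y} {γ : Path x z} {s : I} (hs : s = 0)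
    (h : α s = γ s) : α.initialSegment s = (γ.initialSegment s).cast rfl h := by
  subst hs
  ext t
  simp

theorem initialSegment_trans_symm_of_eq_one {α γ : Path x y} {s : I} (hs : s = 1)
    (h : α s = γ s) :
    (α.initialSegment s).trans ((γ.initialSegment s).cast rfl h).symm = α.trans γ.symm := by
  subst hs
  have hσ (u : I) : Icc.convexComb 1 0 u = σ u := by ext; simp
  ext t
  simp [trans_apply, hσ]

end Path

namespace Paper

variable {X : Type*} [TopologicalSpace X]

theorem loopClass_eq_iff {x : X} {p q : Path x x} :
    loopClass p = loopClass q ↔ Path.Homotopic.Quotient.mk p = Path.Homotopic.Quotient.mk q :=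
  Iff.rfl

theorem loopClass_trans {x : X} (p q : Path x x) :
    loopClass (p.trans q) = loopClass q * loopClass p := rfl

theorem loopClass_trans_symm_self {x y : X} (p : Path x y) : loopClass (p.trans p.symm) = 1 :=
  loopClass_eq_iff.2 (by simp)

theorem loopClass_refl_conj {x : X} (l : Path x x) :
    loopClass (((Path.refl x).trans l).trans (Path.refl x).symm) = loopClass l :=
  loopClass_eq_iff.2 (by simp)

theorem loopClass_trans_symm_congr {x y : X} {p p' q q' : Path x y} (hp : p.Homotopic p')
    (hq : q.Homotopic q') : loopClass (p.trans q.symm) = loopClass (p'.trans q'.symm) :=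
  Path.Homotopic.Quotient.eq.2 (hp.hcomp hq.symm₂)

theorem loopClass_trans_trans_symm {b z w : X} (p q : Path b z) (a g : Path z w) :
    loopClass ((p.trans a).trans (q.trans g).symm) =
      loopClass (p.trans q.symm) * loopClass ((p.trans (a.trans g.symm)).trans p.symm) := by
  rw [← loopClass_trans, loopClass_eq_iff]
  simp

theorem loopClass_trans_symm_mul {b y : X} (α β γ : Path b y) :
    loopClass (γ.trans β.symm) * loopClass (α.trans γ.symm) = loopClass (α.trans β.symm) := by
  rw [← loopClass_trans, loopClass_eq_iff]
  simp

theorem pathConj_loopClass_conj {x₀ x : X} (α : Path x₀ x) (l : Path x x) :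
    pathConj α (loopClass ((α.trans l).trans α.symm)) = loopClass l := by
  change (Path.Homotopic.Quotient.mk α).symm.trans
    ((Path.Homotopic.Quotient.mk ((α.trans l).trans α.symm)).trans
      (Path.Homotopic.Quotient.mk α)) = Path.Homotopic.Quotient.mk l
  simp

theorem map_piSub {x₀ x : X} (α : Path x₀ x) (V : Set X) :
    (piSub α V).map (pathConj α).toMonoidHom = loopSubgroup x V := by
  rw [piSub, loopSubgroup, MonoidHom.map_closure]
  congr 1
  ext g
  constructor
  · rintro ⟨-, ⟨β, hβ, rfl⟩, rfl⟩
    exact ⟨β, hβ, pathConj_loopClass_conj α β⟩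
  · rintro ⟨β, hβ, rfl⟩
    exact ⟨_, ⟨β, hβ, rfl⟩, pathConj_loopClass_conj α β⟩

theorem LocallyQuasinormal.exists_conjSubgroup_mul_comm {x₀ : X}
    {H : Subgroup (FundamentalGroup X x₀)} (hH : LocallyQuasinormal H) {x : X} (α : Path x₀ x)
    {U : Set X} (hU : IsOpen U) (hx : x ∈ U) :
    ∃ V ⊆ U, IsOpen V ∧ x ∈ V ∧
      (conjSubgroup H α : Set (FundamentalGroup X x)) * loopSubgroup x V =
        loopSubgroup x V * conjSubgroup H α := by
  obtain ⟨V, hVU, hV, hxV, hcomm⟩ := hH x α U hU hx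
  refine ⟨V, hVU, hV, hxV, ?_⟩
  rw [← map_piSub α V, conjSubgroup, Subgroup.coe_map, Subgroup.coe_map, ← image_mul,
    ← image_mul, hcomm]

theorem exists_loop_of_mem_loopSubgroup {x : X} {V : Set X} (hx : x ∈ V)
    {g : FundamentalGroup X x} (hg : g ∈ loopSubgroup x V) :
    ∃ l : Path x x, (∀ t, l t ∈ V) ∧ g = loopClass l := by
  induction hg using Subgroup.closure_induction with
  | mem g hg => exact hg
  | one => exact ⟨Path.refl x, fun _ => hx, rfl⟩
  | mul _ _ _ _ ih₁ ih₂ =>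
    obtain ⟨l₁, hl₁, rfl⟩ := ih₁
    obtain ⟨l₂, hl₂, rfl⟩ := ih₂
    exact ⟨l₂.trans l₁, Path.trans_mem hl₂ hl₁, rfl⟩
  | inv _ _ ih =>
    obtain ⟨l, hl, rfl⟩ := ih
    exact ⟨l.symm, fun t => hl _, rfl⟩

/-- `[δ] i#π₁(V, z) [δ̄] ⊆ S` in the paper's notation. -/
def ConjLoopsIn {b z : X} (S : Set (FundamentalGroup X b)) (δ : Path b z) (V : Set X) : Prop :=
  ∀ l : Path z z, (∀ t, l t ∈ V) → loopClass ((δ.trans l).trans δ.symm) ∈ S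

section ConjLoopsIn

variable {b z w : X} {S : Set (FundamentalGroup X b)} {δ : Path b z} {V : Set X}

theorem ConjLoopsIn.of_homotopic (h : ConjLoopsIn S δ V) {δ' : Path b z}
    (hδ : δ.Homotopic δ') : ConjLoopsIn S δ' V := by
  intro l hl
  convert h l hl using 1
  rw [loopClass_eq_iff]
  simp [Path.Homotopic.Quotient.eq.2 hδ]

theorem ConjLoopsIn.trans (h : ConjLoopsIn S δ V) {c : Path z w} (hc : ∀ t, c t ∈ V) :
    ConjLoopsIn S (δ.trans c) V := by
  intro l hl
  convert h ((c.trans l).trans c.symm) (Path.trans_mem (Path.trans_mem hc hl) fun t => hc _)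
    using 1
  rw [loopClass_eq_iff]
  simp

end ConjLoopsIn

theorem exists_partition_conjLoopsIn {b y : X} {S : Set (FundamentalGroup X b)} (α : Path b y)
    (hS : ∀ s : I, ∃ V, IsOpen V ∧ α s ∈ V ∧ ConjLoopsIn S (α.initialSegment s) V) :
    ∃ n, 0 < n ∧ ∃ (t : Fin (n + 1) → I) (V : Fin n → Set X),
      StrictMono t ∧ t 0 = 0 ∧ t (Fin.last n) = 1 ∧
      ∀ i, IsOpen (V i) ∧ (∀ s ∈ Icc (t i.castSucc) (t i.succ), α s ∈ V i) ∧
        ConjLoopsIn S (α.initialSegment (t i.castSucc)) (V i) := by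
  choose V hV hαV hSV using hS
  choose ε hε hεV using fun s => Metric.isOpen_iff.1 ((hV s).preimage α.continuous) s (hαV s)
  obtain ⟨n, hn, t, ht, ht0, ht1, hcover⟩ :=
    unitInterval.exists_strictMono_Icc_subset_open_cover (fun s => Metric.isOpen_ball)
      fun s _ => mem_iUnion.2 ⟨s, Metric.mem_ball_self (hε s)⟩
  choose c hc using hcover
  refine ⟨n, hn, t, fun i => V (c i), ht, ht0, ht1, fun i =>
    ⟨hV _, fun s hs => hεV _ (hc i hs), ?_⟩⟩
  have hti : t i.castSucc ∈ Metric.ball (c i) (ε (c i)) :=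
    hc i ⟨le_rfl, (ht Fin.castSucc_lt_succ).le⟩
  have hseg := (unitInterval.ordConnected_ball _ _).uIcc_subset
    (Metric.mem_ball_self (hε (c i))) hti
  exact ((hSV (c i)).trans (Path.subpath_mem fun s hs => hεV _ (hseg hs))).of_homotopic
    (α.initialSegment_trans_subpath _ _)

theorem loopClass_trans_symm_mem_of_partition {b y : X} {S : Subgroup (FundamentalGroup X b)}
    {α γ : Path b y} {n : ℕ} {t : Fin (n + 1) → I} (ht : Monotone t) (ht0 : t 0 = 0)
    (ht1 : t (Fin.last n) = 1) {V : Fin n → Set X}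
    (hS : ∀ i, ConjLoopsIn S (α.initialSegment (t i.castSucc)) (V i))
    (hα : ∀ i, ∀ s ∈ Icc (t i.castSucc) (t i.succ), α s ∈ V i)
    (hγ : ∀ i, ∀ s ∈ Icc (t i.castSucc) (t i.succ), γ s ∈ V i)
    (hγα : ∀ j, γ (t j) = α (t j)) :
    loopClass (α.trans γ.symm) ∈ S := by
  have discrepancy_mem : ∀ j, loopClass ((α.initialSegment (t j)).trans
      ((γ.initialSegment (t j)).cast rfl (hγα j).symm).symm) ∈ S := by
    intro j
    induction j using Fin.induction with
    | zero =>
      rw [← Path.initialSegment_eq_of_eq_zero ht0, loopClass_trans_symm_self]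
      exact S.one_mem
    | succ i ih =>
      set u := t i.castSucc
      set v := t i.succ
      have huv : u ≤ v := ht (Fin.castSucc_le_succ i)
      let g := (γ.subpath u v).cast (hγα i.castSucc).symm (hγα i.succ).symm
      have hγuv : (((γ.initialSegment u).cast rfl (hγα i.castSucc).symm).trans g).Homotopic
          ((γ.initialSegment v).cast rfl (hγα i.succ).symm) :=
        (γ.initialSegment_trans_subpath u v).pathCast rfl _
      rw [← loopClass_trans_symm_congr (α.initialSegment_trans_subpath u v) hγuv,
        loopClass_trans_trans_symm]
      refine S.mul_mem ih (hS i _ (Path.trans_mem ?_ fun s => ?_))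
      · exact Path.subpath_mem fun s hs => hα i s (uIcc_of_le huv ▸ hs)
      · exact Path.subpath_mem (γ := γ) (fun s hs => hγ i s (uIcc_of_le huv ▸ hs)) _
  simpa [Path.initialSegment_trans_symm_of_eq_one ht1] using discrepancy_mem (Fin.last n)

theorem hH_implies_hpH_conj_general {x₀ : X}
    (H : Subgroup (FundamentalGroup X x₀)) (hSLT : IsHSLT H)
    (hq : LocallyQuasinormal H) :
    ∀ (x : X) (α : Path x₀ x),
      HomotopicallyHausdorffRel (conjSubgroup H α) →
        HomotopicallyPathHausdorffRel (conjSubgroup H α) := by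
  intro b α₀ hHH y α β hαβ
  obtain ⟨U, hU, hbU, hUsep⟩ := hHH b (Path.refl b) _ hαβ
  obtain ⟨W, hWU, hW, hbW, hcomm⟩ := hq.exists_conjSubgroup_mul_comm α₀ hU hbU
  have hKW := Subgroup.coe_sup_of_mul_comm hcomm
  obtain ⟨n, hn, t, V, ht, ht0, ht1, hV⟩ := exists_partition_conjLoopsIn α fun s =>
    hKW ▸ hSLT b α₀ (α s) (α.initialSegment s) W hW hbW
  refine ⟨n, hn, t, V, ht, ht0, ht1, fun i => ⟨(hV i).1, (hV i).2.1⟩, fun γ hγ hγα hγβ => ?_⟩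
  have hαγ := loopClass_trans_symm_mem_of_partition ht.monotone ht0 ht1
    (fun i => (hV i).2.2) (fun i => (hV i).2.1) hγ hγα
  rw [← SetLike.mem_coe, hKW] at hαγ
  obtain ⟨k, hk, g, hg, hkg⟩ := hαγ
  obtain ⟨l, hl, rfl⟩ := exists_loop_of_mem_loopSubgroup hbW hg
  refine hUsep l (fun τ => hWU (hl τ)) (k⁻¹ * (loopClass (γ.trans β.symm))⁻¹)
    (mul_mem (inv_mem hk) (inv_mem hγβ)) ?_
  rw [loopClass_refl_conj, ← loopClass_trans_symm_mul α β γ, ← hkg]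
  group

/-- Corollary 3.5: if `X` is `H`-SLT and `H` is locally quasinormal, then for
every path `α` from `x₀`, h.H relative to `H_α` implies h.p.H relative to `H_α`. -/
theorem hH_implies_hpH_conj [PathConnectedSpace X] {x₀ : X}
    (H : Subgroup (FundamentalGroup X x₀)) (hSLT : IsHSLT H)
    (hq : LocallyQuasinormal H) :
    ∀ (x : X) (α : Path x₀ x),
      HomotopicallyHausdorffRel (conjSubgroup H α) →
        HomotopicallyPathHausdorffRel (conjSubgroup H α) :=
  hH_implies_hpH_conj_general H hSLT hq

end Paper
end

section
/- Let X be a path-connected space with basepoint x₀ and H ≤ π₁(X,x₀). If X is an H-SLT space, then for every path α from x₀ with α(1) = x: X is homotopically Hausdorff relative to H_α if and only if H_α is a closed subset of π₁(X,x) equipped with the whisker topology. -/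
open CategoryTheory Topology
open scoped Pointwise

noncomputable section
namespace Paper

variable {X : Type*} [TopologicalSpace X]

attribute [local instance] Path.Homotopic.setoid

end Paper
end

/-!
Conjugating along `α` reduces everything to the basepoint `x = α(1)` and the subgroup
`K = H_α`. The basic whisker neighbourhoods of `g ∈ π₁(X,x)` are the sets `g·[β]` with `β` a
loop in an open `U ∋ x`, so `K` is closed exactly when every `g ∉ K` has such a neighbourhood
missing `K`; taking the constant path in the definition of homotopically Hausdorff gives one.
Conversely, given a path `β` from `x` and `g ∉ K`, choose `U` with `g·i_#π₁(U,x) ∩ K = ∅`; the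
`K`-SLT property turns every small loop `δ` at `β(1)` into `[β δ β̄] ∈ K·i_#π₁(U,x)`, so
`[β δ β̄] ∈ Kg` would put `g` into `K·i_#π₁(U,x)`, which is impossible.
-/

namespace Paper

variable {X : Type*} [TopologicalSpace X]

section LoopClass

variable {x : X}

lemma loopClass_trans_s6 (γ δ : Path x x) :
    loopClass (γ.trans δ) = loopClass δ * loopClass γ :=
  Path.Homotopic.Quotient.mk_trans γ δ

lemma loopClass_refl : loopClass (Path.refl x) = 1 := rfl

lemma loopClass_symm (γ : Path x x) : loopClass γ.symm = (loopClass γ)⁻¹ := by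
  refine eq_inv_of_mul_eq_one_left ?_
  rw [← loopClass_trans_s6]
  exact Quotient.sound ⟨(Path.Homotopy.reflTransSymm γ).symm⟩

lemma loopClass_refl_trans_trans_refl_symm (δ : Path x x) :
    loopClass (((Path.refl x).trans δ).trans (Path.refl x).symm) = loopClass δ := by
  simp only [Path.refl_symm, loopClass_trans_s6, loopClass_refl, one_mul, mul_one]

end LoopClass

lemma Path.trans_mem {x y z : X} {U : Set X} {a : Path x y} {b : Path y z}
    (ha : ∀ t, a t ∈ U) (hb : ∀ t, b t ∈ U) (t : unitInterval) : a.trans b t ∈ U := by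
  rw [Path.trans_apply]
  split
  · exact ha _
  · exact hb _

/-- Since `x ∈ U`, the loops in `U` at `x` are closed under concatenation, reversal and contain
the constant loop, so their classes already form a subgroup. -/
lemma exists_loopClass_eq_of_mem_loopSubgroup {x : X} {U : Set X} (hx : x ∈ U)
    {g : FundamentalGroup X x} (hg : g ∈ loopSubgroup x U) :
    ∃ β : Path x x, (∀ t, β t ∈ U) ∧ g = loopClass β := by
  induction hg using Subgroup.closure_induction with
  | mem g hg => exact hg
  | one => exact ⟨Path.refl x, fun _ => hx, loopClass_refl.symm⟩
  | mul a b _ _ iha ihb =>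
    obtain ⟨β, hβ, rfl⟩ := iha
    obtain ⟨γ, hγ, rfl⟩ := ihb
    exact ⟨γ.trans β, Path.trans_mem hγ hβ, (loopClass_trans_s6 γ β).symm⟩
  | inv a _ iha =>
    obtain ⟨β, hβ, rfl⟩ := iha
    exact ⟨β.symm, fun t => hβ _, (loopClass_symm β).symm⟩

section WhiskerTopology

/-- The basic whisker neighbourhood `g · i_#π₁(U,x)` of `g` in `π₁(X,x)`. -/
def whiskerBasic {x : X} (g : FundamentalGroup X x) (U : Set X) : Set (FundamentalGroup X x) :=
  {g' | ∃ β : Path x x, (∀ t, β t ∈ U) ∧ g' = g * loopClass β}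

variable {x : X} {U : Set X}

lemma mem_whiskerBasic_self (g : FundamentalGroup X x) (hx : x ∈ U) : g ∈ whiskerBasic g U :=
  ⟨Path.refl x, fun _ => hx, by rw [loopClass_refl, mul_one]⟩

lemma isOpen_whiskerBasic (g : FundamentalGroup X x) (hU : IsOpen U) (hx : x ∈ U) :
    IsOpen[whiskerTopOnPi x] (whiskerBasic g U) :=
  TopologicalSpace.isOpen_generateFrom_of_mem ⟨g, U, hU, hx, rfl⟩

lemma whiskerBasic_subset_of_mem {g g' : FundamentalGroup X x} {V : Set X}
    (hg : g ∈ whiskerBasic g' V) (hUV : U ⊆ V) : whiskerBasic g U ⊆ whiskerBasic g' V := by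
  obtain ⟨γ, hγ, rfl⟩ := hg
  rintro _ ⟨δ, hδ, rfl⟩
  exact ⟨δ.trans γ, Path.trans_mem (fun t => hUV (hδ t)) hγ, by rw [loopClass_trans_s6, mul_assoc]⟩

lemma exists_whiskerBasic_subset_of_isOpen {O : Set (FundamentalGroup X x)}
    (hO : IsOpen[whiskerTopOnPi x] O) {g : FundamentalGroup X x} (hg : g ∈ O) :
    ∃ U : Set X, IsOpen U ∧ x ∈ U ∧ whiskerBasic g U ⊆ O := by
  induction hO generalizing g with
  | basic s hs =>
    obtain ⟨g', V, hV, hxV, rfl⟩ := hs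
    exact ⟨V, hV, hxV, whiskerBasic_subset_of_mem hg le_rfl⟩
  | univ => exact ⟨Set.univ, isOpen_univ, trivial, Set.subset_univ _⟩
  | inter s t _ _ ihs iht =>
    obtain ⟨U, hU, hxU, hUs⟩ := ihs hg.1
    obtain ⟨V, hV, hxV, hVt⟩ := iht hg.2
    exact ⟨U ∩ V, hU.inter hV, ⟨hxU, hxV⟩, Set.subset_inter
      ((whiskerBasic_subset_of_mem (mem_whiskerBasic_self g hxU) Set.inter_subset_left).trans hUs)
      ((whiskerBasic_subset_of_mem (mem_whiskerBasic_self g hxV) Set.inter_subset_right).trans hVt)⟩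
  | sUnion S _ ih =>
    obtain ⟨s, hsS, hgs⟩ := hg
    obtain ⟨U, hU, hxU, hUs⟩ := ih s hsS hgs
    exact ⟨U, hU, hxU, hUs.trans (Set.subset_sUnion_of_mem hsS)⟩

end WhiskerTopology

variable {x : X} {K : Subgroup (FundamentalGroup X x)}

lemma whiskerBasic_subset_compl_of_forall_ne {g : FundamentalGroup X x} {U : Set X}
    (hU : ∀ β : Path x x, (∀ t, β t ∈ U) → ∀ h ∈ K, loopClass β ≠ h * g) :
    whiskerBasic g U ⊆ (K : Set (FundamentalGroup X x))ᶜ := by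
  rintro _ ⟨δ, hδ, rfl⟩ hk
  refine hU δ.symm (fun t => hδ _) _ (K.inv_mem hk) ?_
  rw [loopClass_symm, mul_inv_rev, inv_mul_cancel_right]

lemma isClosed_of_homotopicallyHausdorffRel (hK : HomotopicallyHausdorffRel K) :
    IsClosed[whiskerTopOnPi x] (K : Set (FundamentalGroup X x)) := by
  let := whiskerTopOnPi x
  refine isOpen_compl_iff.mp (isOpen_iff_forall_mem_open.mpr fun g hg => ?_)
  obtain ⟨U, hU, hxU, hne⟩ := hK x (Path.refl x) g hg
  refine ⟨whiskerBasic g U, whiskerBasic_subset_compl_of_forall_ne fun β hβ => ?_,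
    isOpen_whiskerBasic g hU hxU, mem_whiskerBasic_self g hxU⟩
  simpa only [loopClass_refl_trans_trans_refl_symm] using hne β hβ

lemma notMem_mul_loopSubgroup_of_whiskerBasic_subset_compl {g : FundamentalGroup X x}
    {U : Set X} (hxU : x ∈ U) (hU : whiskerBasic g U ⊆ (K : Set (FundamentalGroup X x))ᶜ) :
    g ∉ (K : Set (FundamentalGroup X x)) * (loopSubgroup x U : Set (FundamentalGroup X x)) := by
  intro hg
  obtain ⟨k, hk, l, hl, rfl⟩ := Set.mem_mul.mp hg
  obtain ⟨β, hβ, hβl⟩ := exists_loopClass_eq_of_mem_loopSubgroup hxU (inv_mem hl)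
  exact hU ⟨β, hβ, rfl⟩ (by rwa [← hβl, mul_inv_cancel_right])

lemma homotopicallyHausdorffRel_of_isClosed (hSLT : SLTAt K)
    (hK : IsClosed[whiskerTopOnPi x] (K : Set (FundamentalGroup X x))) :
    HomotopicallyHausdorffRel K := by
  intro y β g hg
  obtain ⟨U, hU, hxU, hgU⟩ := exists_whiskerBasic_subset_of_isOpen hK.isOpen_compl hg
  obtain ⟨V, hV, hyV, hSLTV⟩ := hSLT y β U hU hxU
  refine ⟨V, hV, hyV, fun δ hδ h hh hδg => ?_⟩
  refine notMem_mul_loopSubgroup_of_whiskerBasic_subset_compl hxU hgU ?_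
  obtain ⟨k, hk, l, hl, hkl⟩ := Set.mem_mul.mp (hδg ▸ hSLTV δ hδ)
  exact Set.mem_mul.mpr
    ⟨h⁻¹ * k, K.mul_mem (K.inv_mem hh) hk, l, hl, by rw [mul_assoc, hkl, inv_mul_cancel_left]⟩

theorem hH_iff_closed_whisker_general {x₀ : X}
    (H : Subgroup (FundamentalGroup X x₀)) (hSLT : IsHSLT H) :
    ∀ (x : X) (α : Path x₀ x),
      HomotopicallyHausdorffRel (conjSubgroup H α) ↔
        @IsClosed _ (whiskerTopOnPi x)
          (conjSubgroup H α : Set (FundamentalGroup X x)) :=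
  fun x α => ⟨isClosed_of_homotopicallyHausdorffRel,
    homotopicallyHausdorffRel_of_isClosed (hSLT x α)⟩

/-- Theorem 3.7: for an `H`-SLT space, `X` is h.H relative to `H_α` iff `H_α`
is closed in the whisker topology on `π₁(X, α(1))`. -/
theorem hH_iff_closed_whisker [PathConnectedSpace X] {x₀ : X}
    (H : Subgroup (FundamentalGroup X x₀)) (hSLT : IsHSLT H) :
    ∀ (x : X) (α : Path x₀ x),
      HomotopicallyHausdorffRel (conjSubgroup H α) ↔
        @IsClosed _ (whiskerTopOnPi x)
          (conjSubgroup H α : Set (FundamentalGroup X x)) :=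
  hH_iff_closed_whisker_general H hSLT

end Paper
end
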